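/- For every error bound ε > 0 and probability level δ ∈ (0,1) there exists m₀ ∈ ℕ such that for every m ≥ m₀ and every i ∈ {0,…,n_c}, with probability at least 1−δ (with respect to the i.i.d. sampling) the empirical mass matrix C̃⁽ⁱ⁾_m is invertible and the eDMD estimator satisfies ‖L_V^{F_i} − (C̃⁽ⁱ⁾_m)^{-1} Ã^{F_i}_m‖_F ≤ ε, where ‖·‖_F denotes the Frobenius norm. -/

import Mathlib

open MeasureTheory ProbabilityTheory

/-- Frobenius norm of a real `N × N` matrix. -/
noncomputable def frobeniusNorm {N : ℕ} (M : Matrix (Fin N) (Fin N) ℝ) : ℝ :=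
  Real.sqrt (∑ i, ∑ j, (M i j) ^ 2)

open Filter Topology

/-! By the strong law of large numbers, applied entrywise, the empirical matrices `C̃⁽ⁱ⁾_m` and
`Ã^{F_i}_m` converge almost surely to `C` and `A^{F_i}`: their entries are sample means of
continuous functions, which are integrable because `μ` lives on the compact set `𝕏`. Inversion is
continuous at the invertible `C`, so almost surely the estimator `(C̃⁽ⁱ⁾_m)⁻¹ Ã^{F_i}_m` is
eventually defined and `ε`-close to `L_V^{F_i}`. Hence the probability of the good event tends
to `1` for each of the finitely many `i`, and one `m₀` serves them all. -/

section SampleMean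

variable {α Ω : Type*} [MeasurableSpace α] [MeasurableSpace Ω] {P : Measure Ω} {μ : Measure α}
  {Xs : ℕ → Ω → α}

theorem ae_tendsto_sampleMean (hXmeas : ∀ r, Measurable (Xs r)) (hXindep : iIndepFun Xs P)
    (hXdist : ∀ r, P.map (Xs r) = μ) {h : α → ℝ} (hmeas : Measurable h) (hint : Integrable h μ) :
    ∀ᵐ ω ∂P, Tendsto (fun m : ℕ => (1 / m : ℝ) * ∑ r ∈ Finset.range m, h (Xs r ω)) atTop
      (𝓝 (∫ y, h y ∂μ)) := by
  have hmean : ∫ ω, h (Xs 0 ω) ∂P = ∫ y, h y ∂μ := by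
    rw [← hXdist 0, integral_map (hXmeas 0).aemeasurable hmeas.aestronglyMeasurable]
  have hint₀ : Integrable (fun ω => h (Xs 0 ω)) P := by
    rw [← hXdist 0] at hint
    exact hint.comp_measurable (hXmeas 0)
  have hindep : Pairwise (Function.onFun (IndepFun · · P) fun r ω => h (Xs r ω)) :=
    fun r s hrs => (hXindep.indepFun hrs).comp hmeas hmeas
  have hident : ∀ r, IdentDistrib (fun ω => h (Xs r ω)) (fun ω => h (Xs 0 ω)) P P := fun r =>
    IdentDistrib.comp ⟨(hXmeas r).aemeasurable, (hXmeas 0).aemeasurable, by rw [hXdist r, hXdist 0]⟩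
      hmeas
  filter_upwards [strong_law_ae_real _ hint₀ hindep hident] with ω hω
  rw [hmean] at hω
  simpa only [one_div, inv_mul_eq_div] using hω

theorem ae_tendsto_of_entry_eq_sampleMean {ι κ : Type*} [Countable ι] [Countable κ]
    (hXmeas : ∀ r, Measurable (Xs r)) (hXindep : iIndepFun Xs P) (hXdist : ∀ r, P.map (Xs r) = μ)
    {h : ι → κ → α → ℝ} (hmeas : ∀ k l, Measurable (h k l)) (hint : ∀ k l, Integrable (h k l) μ)
    {M : ℕ → Ω → Matrix ι κ ℝ}
    (hM : ∀ m ω k l, M m ω k l = (1 / m : ℝ) * ∑ r ∈ Finset.range m, h k l (Xs r ω))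
    {L : Matrix ι κ ℝ} (hL : ∀ k l, L k l = ∫ y, h k l y ∂μ) :
    ∀ᵐ ω ∂P, Tendsto (fun m => M m ω) atTop (𝓝 L) := by
  have hentry : ∀ᵐ ω ∂P, ∀ k l,
      Tendsto (fun m => M m ω k l) atTop (𝓝 (L k l)) := by
    simp only [hM, hL]
    exact ae_all_iff.2 fun k => ae_all_iff.2 fun l =>
      ae_tendsto_sampleMean hXmeas hXindep hXdist (hmeas k l) (hint k l)
  filter_upwards [hentry] with ω hω
  exact tendsto_pi_nhds.2 fun k => tendsto_pi_nhds.2 (hω k)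

end SampleMean

theorem tendsto_measure_one_of_ae_eventually_mem {Ω : Type*} [MeasurableSpace Ω] {P : Measure Ω}
    [IsProbabilityMeasure P] {E : ℕ → Set Ω} (h : ∀ᵐ ω ∂P, ∀ᶠ m in atTop, ω ∈ E m) :
    Tendsto (fun m => P (E m)) atTop (𝓝 1) := by
  set B : ℕ → Set Ω := fun m => ⋂ k ≥ m, E k
  have hBmono : Monotone B := fun a b hab =>
    Set.biInter_subset_biInter_left fun _ hk => le_trans hab hk
  have hUnion : ⋃ m, B m = {ω | ∀ᶠ m in atTop, ω ∈ E m} := by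
    ext ω
    simp only [B, Set.mem_iUnion, Set.mem_iInter, Set.mem_ofPred_eq, eventually_atTop, ge_iff_le]
  have hfull : P (⋃ m, B m) = 1 := by
    rw [hUnion, measure_congr (ae_eq_univ.2 h), measure_univ]
  have hB := tendsto_measure_iUnion_atTop (μ := P) hBmono
  rw [hfull] at hB
  exact tendsto_of_tendsto_of_tendsto_of_le_of_le hB tendsto_const_nhds
    (fun m => measure_mono fun ω hω => Set.mem_iInter₂.1 hω m le_rfl) (fun _ => prob_le_one)

theorem ContinuousOn.integrable_of_ae_mem {α : Type*} [TopologicalSpace α] [T2Space α]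
    [MeasurableSpace α] [OpensMeasurableSpace α] {μ : Measure α} [IsFiniteMeasure μ] {K : Set α}
    {h : α → ℝ} (hh : ContinuousOn h K) (hK : IsCompact K) (hKμ : ∀ᵐ x ∂μ, x ∈ K) :
    Integrable h μ := by
  rw [← Measure.restrict_eq_self_of_ae_mem hKμ]
  exact hh.integrableOn_compact hK

theorem continuous_vectorField {E : Type*} [TopologicalSpace E] [AddCommGroup E]
    [ContinuousAdd E] {n : ℕ} {f : E → E} (hf : Continuous f) {g : Fin n → E → E}
    (hg : ∀ i, Continuous (g i)) {F : Fin (n + 1) → E → E} (hF0 : F 0 = f)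
    (hFsucc : ∀ i : Fin n, F i.succ = fun y => f y + g i y) (i : Fin (n + 1)) :
    Continuous (F i) := by
  induction i using Fin.cases with
  | zero => exact hF0 ▸ hf
  | succ j => exact (hFsucc j) ▸ hf.add (hg j)

theorem tendsto_frobeniusNorm_zero {N : ℕ} {M : ℕ → Matrix (Fin N) (Fin N) ℝ}
    (hM : Tendsto M atTop (𝓝 0)) : Tendsto (fun m => frobeniusNorm (M m)) atTop (𝓝 0) := by
  have hcont : Continuous (frobeniusNorm (N := N)) :=
    Real.continuous_sqrt.comp <| continuous_finsetSum _ fun k _ =>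
      continuous_finsetSum _ fun l _ => (continuous_id.matrix_elem k l).pow 2
  have hzero : frobeniusNorm (0 : Matrix (Fin N) (Fin N) ℝ) = 0 := by simp [frobeniusNorm]
  exact hzero ▸ (hcont.tendsto 0).comp hM

theorem eventually_isUnit_det_and_frobeniusNorm_sub_inv_mul_le {N : ℕ}
    {C A L : Matrix (Fin N) (Fin N) ℝ} {Cₘ Aₘ : ℕ → Matrix (Fin N) (Fin N) ℝ}
    (hC : IsUnit C.det) (hCₘ : Tendsto Cₘ atTop (𝓝 C)) (hAₘ : Tendsto Aₘ atTop (𝓝 A))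
    (hL : L = C⁻¹ * A) {ε : ℝ} (hε : 0 < ε) :
    ∀ᶠ m in atTop, IsUnit (Cₘ m).det ∧ frobeniusNorm (L - (Cₘ m)⁻¹ * Aₘ m) ≤ ε := by
  have hdet : ∀ᶠ m in atTop, IsUnit (Cₘ m).det :=
    ((continuous_id.matrix_det.tendsto C).comp hCₘ).eventually (Units.isOpen.mem_nhds hC)
  have hinv : ContinuousAt Ring.inverse C.det := by
    rw [Ring.inverse_eq_inv']
    exact continuousAt_inv₀ hC.ne_zero
  have hest : Tendsto (fun m => L - (Cₘ m)⁻¹ * Aₘ m) atTop (𝓝 0) := by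
    have h := (tendsto_const_nhds (x := L)).sub
      (((continuousAt_matrix_inv C hinv).tendsto.comp hCₘ).mul hAₘ)
    rwa [← hL, sub_self] at h
  filter_upwards [hdet, (tendsto_frobeniusNorm_zero hest).eventually_le_const hε] with m h1 h2
  exact ⟨h1, h2⟩

theorem eDMD_generator_error_bound_general {d N nc : ℕ}
    (X : Set (EuclideanSpace ℝ (Fin d))) (hXcpt : IsCompact X)
    (μ : Measure (EuclideanSpace ℝ (Fin d)))
    (hμ : μ = (volume X)⁻¹ • volume.restrict X)
    (ψ : Fin N → EuclideanSpace ℝ (Fin d) → ℝ)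
    (hψ : ∀ j, ContDiff ℝ 1 (ψ j))
    (C : Matrix (Fin N) (Fin N) ℝ)
    (hC : ∀ k l, C k l = ∫ y, ψ k y * ψ l y ∂μ)
    (hCinv : IsUnit C.det)
    (f : EuclideanSpace ℝ (Fin d) → EuclideanSpace ℝ (Fin d)) (hf : Continuous f)
    (g : Fin nc → EuclideanSpace ℝ (Fin d) → EuclideanSpace ℝ (Fin d))
    (hg : ∀ i, Continuous (g i))
    -- the autonomous vector fields F₀ = f and F_i = f + g_i:
    (F : Fin (nc + 1) → EuclideanSpace ℝ (Fin d) → EuclideanSpace ℝ (Fin d))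
    (hF0 : F 0 = f) (hFsucc : ∀ i : Fin nc, F i.succ = fun y => f y + g i y)
    -- generators applied to the dictionary: (L_{F_i} ψ_l)(y) = ⟨∇ψ_l(y), F_i(y)⟩
    (LF : Fin (nc + 1) → Fin N → EuclideanSpace ℝ (Fin d) → ℝ)
    (hLF : ∀ i l y, LF i l y = fderiv ℝ (ψ l) y (F i y))
    (A : Fin (nc + 1) → Matrix (Fin N) (Fin N) ℝ)
    (hA : ∀ i k l, A i k l = ∫ y, ψ k y * LF i l y ∂μ)
    -- matrix representations of the Galerkin-projected generators:
    (LV : Fin (nc + 1) → Matrix (Fin N) (Fin N) ℝ)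
    (hLV : ∀ i, LV i = C⁻¹ * A i)
    -- i.i.d. samples with distribution μ, for each constant control:
    {Ω : Type*} [MeasurableSpace Ω] (P : Measure Ω) [IsProbabilityMeasure P]
    (Xs : Fin (nc + 1) → ℕ → Ω → EuclideanSpace ℝ (Fin d))
    (hXmeas : ∀ i r, Measurable (Xs i r))
    (hXindep : ∀ i, iIndepFun (Xs i) P)
    (hXdist : ∀ i r, P.map (Xs i r) = μ)
    -- empirical matrices:
    (Ct : Fin (nc + 1) → ℕ → Ω → Matrix (Fin N) (Fin N) ℝ)
    (hCt : ∀ i m ω k l,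
      Ct i m ω k l = (1 / m : ℝ) * ∑ r ∈ Finset.range m, ψ k (Xs i r ω) * ψ l (Xs i r ω))
    (At : Fin (nc + 1) → ℕ → Ω → Matrix (Fin N) (Fin N) ℝ)
    (hAt : ∀ i m ω k l,
      At i m ω k l = (1 / m : ℝ) * ∑ r ∈ Finset.range m, ψ k (Xs i r ω) * LF i l (Xs i r ω)) :
    ∀ ε > 0, ∀ δ ∈ Set.Ioo (0 : ℝ) 1, ∃ m₀ : ℕ, ∀ m ≥ m₀, ∀ i : Fin (nc + 1),
      1 - δ ≤ (P {ω | IsUnit (Ct i m ω).det ∧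
        frobeniusNorm (LV i - (Ct i m ω)⁻¹ * At i m ω) ≤ ε}).toReal := by
  intro ε hε δ hδ
  have : IsProbabilityMeasure μ :=
    hXdist 0 0 ▸ Measure.isProbabilityMeasure_map (hXmeas 0 0).aemeasurable
  have hXae : ∀ᵐ y ∂μ, y ∈ X :=
    hμ ▸ Measure.ae_smul_measure (ae_restrict_mem hXcpt.measurableSet) _
  have hψc : ∀ l, Continuous (ψ l) := fun l => (hψ l).continuous
  have hLFc : ∀ i l, Continuous (LF i l) := fun i l => by
    rw [funext (hLF i l)]
    exact ((hψ l).continuous_fderiv one_ne_zero).clm_apply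
      (continuous_vectorField hf hg hF0 hFsucc i)
  have hslln : ∀ i {h : Fin N → Fin N → EuclideanSpace ℝ (Fin d) → ℝ}
      {M : ℕ → Ω → Matrix (Fin N) (Fin N) ℝ} {L : Matrix (Fin N) (Fin N) ℝ},
      (∀ k l, Continuous (h k l)) →
      (∀ m ω k l, M m ω k l = (1 / m : ℝ) * ∑ r ∈ Finset.range m, h k l (Xs i r ω)) →
      (∀ k l, L k l = ∫ y, h k l y ∂μ) → ∀ᵐ ω ∂P, Tendsto (fun m => M m ω) atTop (𝓝 L) :=
    fun i _ _ _ hh hM hL => ae_tendsto_of_entry_eq_sampleMean (hXmeas i) (hXindep i) (hXdist i)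
      (fun k l => (hh k l).measurable)
      (fun k l => (hh k l).continuousOn.integrable_of_ae_mem hXcpt hXae) hM hL
  have hgood : ∀ i, Tendsto (fun m => P {ω | IsUnit (Ct i m ω).det ∧
      frobeniusNorm (LV i - (Ct i m ω)⁻¹ * At i m ω) ≤ ε}) atTop (𝓝 1) := fun i => by
    refine tendsto_measure_one_of_ae_eventually_mem ?_
    filter_upwards [hslln i (fun k l => (hψc k).mul (hψc l)) (hCt i) hC,
      hslln i (fun k l => (hψc k).mul (hLFc i l)) (hAt i) (hA i)] with ω hCω hAω
    exact eventually_isUnit_det_and_frobeniusNorm_sub_inv_mul_le hCinv hCω hAω (hLV i) hε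
  obtain ⟨m₀, hm₀⟩ := eventually_atTop.1 <| eventually_all.2 fun i =>
    ((ENNReal.tendsto_toReal ENNReal.one_ne_top).comp (hgood i)).eventually
      (lt_mem_nhds (show 1 - δ < (1 : ENNReal).toReal by simp [hδ.1]))
  exact ⟨m₀, fun m hm i => (hm₀ m hm i).le⟩

/-- finite-data probabilistic error bound for the eDMD estimators of
the Galerkin-projected Koopman generators of the autonomous systems `ẋ = F_i(x)`,
`F₀ = f`, `F_i = f + g_i`: for every `ε > 0` and `δ ∈ (0,1)` there is `m₀` such that
for all `m ≥ m₀` and all `i`, with probability at least `1 − δ` the empirical mass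
matrix `C̃⁽ⁱ⁾_m` is invertible and `‖L_V^{F_i} − (C̃⁽ⁱ⁾_m)⁻¹ Ã^{F_i}_m‖_F ≤ ε`. -/
theorem eDMD_generator_error_bound {d N nc : ℕ}
    (X : Set (EuclideanSpace ℝ (Fin d))) (hXcpt : IsCompact X)
    (hXpos : 0 < volume X)
    (μ : Measure (EuclideanSpace ℝ (Fin d)))
    (hμ : μ = (volume X)⁻¹ • volume.restrict X)
    (ψ : Fin N → EuclideanSpace ℝ (Fin d) → ℝ)
    (hψ : ∀ j, ContDiff ℝ 1 (ψ j))
    (C : Matrix (Fin N) (Fin N) ℝ)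
    (hC : ∀ k l, C k l = ∫ y, ψ k y * ψ l y ∂μ)
    (hCinv : IsUnit C.det)
    (f : EuclideanSpace ℝ (Fin d) → EuclideanSpace ℝ (Fin d)) (hf : Continuous f)
    (g : Fin nc → EuclideanSpace ℝ (Fin d) → EuclideanSpace ℝ (Fin d))
    (hg : ∀ i, Continuous (g i))
    -- the autonomous vector fields F₀ = f and F_i = f + g_i:
    (F : Fin (nc + 1) → EuclideanSpace ℝ (Fin d) → EuclideanSpace ℝ (Fin d))
    (hF0 : F 0 = f) (hFsucc : ∀ i : Fin nc, F i.succ = fun y => f y + g i y)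
    -- generators applied to the dictionary: (L_{F_i} ψ_l)(y) = ⟨∇ψ_l(y), F_i(y)⟩
    (LF : Fin (nc + 1) → Fin N → EuclideanSpace ℝ (Fin d) → ℝ)
    (hLF : ∀ i l y, LF i l y = fderiv ℝ (ψ l) y (F i y))
    (A : Fin (nc + 1) → Matrix (Fin N) (Fin N) ℝ)
    (hA : ∀ i k l, A i k l = ∫ y, ψ k y * LF i l y ∂μ)
    -- matrix representations of the Galerkin-projected generators:
    (LV : Fin (nc + 1) → Matrix (Fin N) (Fin N) ℝ)
    (hLV : ∀ i, LV i = C⁻¹ * A i)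
    -- i.i.d. samples with distribution μ, for each constant control:
    {Ω : Type*} [MeasurableSpace Ω] (P : Measure Ω) [IsProbabilityMeasure P]
    (Xs : Fin (nc + 1) → ℕ → Ω → EuclideanSpace ℝ (Fin d))
    (hXmeas : ∀ i r, Measurable (Xs i r))
    (hXindep : ∀ i, iIndepFun (Xs i) P)
    (hXdist : ∀ i r, P.map (Xs i r) = μ)
    -- empirical matrices:
    (Ct : Fin (nc + 1) → ℕ → Ω → Matrix (Fin N) (Fin N) ℝ)
    (hCt : ∀ i m ω k l,
      Ct i m ω k l = (1 / m : ℝ) * ∑ r ∈ Finset.range m, ψ k (Xs i r ω) * ψ l (Xs i r ω))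
    (At : Fin (nc + 1) → ℕ → Ω → Matrix (Fin N) (Fin N) ℝ)
    (hAt : ∀ i m ω k l,
      At i m ω k l = (1 / m : ℝ) * ∑ r ∈ Finset.range m, ψ k (Xs i r ω) * LF i l (Xs i r ω)) :
    ∀ ε > 0, ∀ δ ∈ Set.Ioo (0 : ℝ) 1, ∃ m₀ : ℕ, ∀ m ≥ m₀, ∀ i : Fin (nc + 1),
      1 - δ ≤ (P {ω | IsUnit (Ct i m ω).det ∧
        frobeniusNorm (LV i - (Ct i m ω)⁻¹ * At i m ω) ≤ ε}).toReal :=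
  eDMD_generator_error_bound_general X hXcpt μ hμ ψ hψ C hC hCinv f hf g hg F hF0 hFsucc LF hLF A hA
    LV hLV P Xs hXmeas hXindep hXdist Ct hCt At hAt
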